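/- Let A be a finite alphabet with at least two letters and let σ = φ₁ ∘ ⋯ ∘ φ_k ∘ π be an episturmian morphism of A* with k ≥ 1 (so σ is not a permutation), where each φ_i ∈ {ψ_a, ψ̄_a : a ∈ A} and π is a permutation of A. Then there exists a unique letter a_min ∈ A such that |σ(a_min)| < |σ(a)| for every a ∈ A with a ≠ a_min. Moreover, if σ = ψ_u for a nonempty word u ∈ A⁺, then a_min is the last letter of u. -/

import Mathlib

open List

section EpiDefs

variable {A : Type*}

/-- The episturmian generator ψ_a : a ↦ a, b ↦ ab for b ≠ a, as a map on words. -/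
def psiL [DecidableEq A] (a : A) : List A → List A :=
  fun u => (u.map (fun b => if b = a then [a] else [a, b])).flatten

/-- The episturmian generator ψ̄_a : a ↦ a, b ↦ ba for b ≠ a, as a map on words. -/
def psibarL [DecidableEq A] (a : A) : List A → List A :=
  fun u => (u.map (fun b => if b = a then [a] else [b, a])).flatten

/-- ψ_{u₁⋯uₙ} = ψ_{u₁} ∘ ⋯ ∘ ψ_{uₙ}. -/
def psiW [DecidableEq A] (u : List A) : List A → List A :=
  u.foldr (fun a f => psiL a ∘ f) id

/-- ψ̄_{u₁⋯uₙ} = ψ̄_{u₁} ∘ ⋯ ∘ ψ̄_{uₙ}. -/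
def psibarW [DecidableEq A] (u : List A) : List A → List A :=
  u.foldr (fun a f => psibarL a ∘ f) id

/-- There is a shortest palindrome having `x` as a prefix. -/
theorem exists_isPalClosure (x : List A) :
    ∃ p : List A, (p.reverse = p ∧ x <+: p) ∧
      ∀ q : List A, q.reverse = q → x <+: q → p.length ≤ q.length := by
  classical
  have hex : ∃ n : ℕ, ∃ p : List A, (p.reverse = p ∧ x <+: p) ∧ p.length = n :=
    ⟨(x ++ x.reverse).length, x ++ x.reverse, ⟨by simp, ⟨x.reverse, rfl⟩⟩, rfl⟩
  obtain ⟨p, hp, hlen⟩ := Nat.find_spec hex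
  refine ⟨p, hp, fun q h1 h2 => ?_⟩
  rw [hlen]
  exact Nat.find_le ⟨q, ⟨h1, h2⟩, rfl⟩

/-- `palPlus x = x⁽⁺⁾` is the shortest palindrome having `x` as a prefix. -/
noncomputable def palPlus (x : List A) : List A :=
  Classical.choose (exists_isPalClosure x)

/-- Iterated palindromic closure: Pal(ε) = ε, Pal(ua) = (Pal(u)a)⁽⁺⁾. -/
noncomputable def pal (u : List A) : List A :=
  u.foldl (fun p a => palPlus (p ++ [a])) []

/-- Longest common prefix. -/
def gcp [DecidableEq A] : List A → List A → List A
  | a :: x, b :: y => if a = b then a :: gcp x y else []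
  | _, _ => []

/-- Longest common suffix. -/
def gcs [DecidableEq A] (x y : List A) : List A :=
  (gcp x.reverse y.reverse).reverse

/-- The language of a (primitive) substitution: factors of σⁿ(a). -/
def LangS (σ : List A → List A) : Set (List A) :=
  {x | ∃ (n : ℕ) (a : A), x <:+: σ^[n] [a]}

/-- The language of the episturmian shift directed by `d`. -/
def LangD (d : ℕ → A) : Set (List A) :=
  {x | ∃ n : ℕ, x <:+: pal ((List.range n).map d)}

def LeftSpecial (L : Set (List A)) (v : List A) : Prop :=
  ∃ a b : A, a ≠ b ∧ a :: v ∈ L ∧ b :: v ∈ L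

def RightSpecial (L : Set (List A)) (v : List A) : Prop :=
  ∃ a b : A, a ≠ b ∧ v ++ [a] ∈ L ∧ v ++ [b] ∈ L

/-- The left return set of `u` in the language `L`. -/
def leftReturn (L : Set (List A)) (u : List A) : Set (List A) :=
  {r | r ++ u ∈ L ∧ (∃ s : List A, s ≠ [] ∧ r ++ u = u ++ s) ∧
    ¬∃ p q : List A, p ≠ [] ∧ q ≠ [] ∧ r ++ u = p ++ u ++ q}

/-- The right return set of `u` in the language `L`. -/
def rightReturn (L : Set (List A)) (u : List A) : Set (List A) :=
  {r | u ++ r ∈ L ∧ (∃ p : List A, p ≠ [] ∧ u ++ r = p ++ u) ∧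
    ¬∃ p q : List A, p ≠ [] ∧ q ≠ [] ∧ u ++ r = p ++ u ++ q}

/-- `σ` is an endomorphism of the free monoid A*. -/
def IsListHom (σ : List A → List A) : Prop :=
  ∀ x y : List A, σ (x ++ y) = σ x ++ σ y

/-- Primitivity of a substitution. -/
def IsPrimitiveSubst (σ : List A → List A) : Prop :=
  ∃ k : ℕ, 1 ≤ k ∧ ∀ a b : A, b ∈ σ^[k] [a]

/-- At least two distinct letters occur infinitely often in `d`. -/
def NonDegenerate (d : ℕ → A) : Prop :=
  ∃ a b : A, a ≠ b ∧ (∀ N : ℕ, ∃ n : ℕ, N ≤ n ∧ d n = a) ∧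
    (∀ N : ℕ, ∃ n : ℕ, N ≤ n ∧ d n = b)

end EpiDefs


section Aux

variable {A : Type*} [DecidableEq A]

lemma psiL_append (a : A) (x y : List A) :
    psiL a (x ++ y) = psiL a x ++ psiL a y := by
  simp [psiL]

lemma psibarL_append (a : A) (x y : List A) :
    psibarL a (x ++ y) = psibarL a x ++ psibarL a y := by
  simp [psibarL]

lemma psiL_ne_nil (a : A) {u : List A} (hu : u ≠ []) : psiL a u ≠ [] := by
  cases u with
  | nil => exact absurd rfl hu
  | cons c t =>
    simp only [psiL, List.map_cons, List.flatten_cons]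
    split <;> simp

lemma psibarL_ne_nil (a : A) {u : List A} (hu : u ≠ []) : psibarL a u ≠ [] := by
  cases u with
  | nil => exact absurd rfl hu
  | cons c t =>
    simp only [psibarL, List.map_cons, List.flatten_cons]
    split <;> simp

lemma psiW_cons (a : A) (u : List A) (x : List A) :
    psiW (a :: u) x = psiL a (psiW u x) := rfl

lemma psiW_append_word (u : List A) (x y : List A) :
    psiW u (x ++ y) = psiW u x ++ psiW u y := by
  induction u with
  | nil => simp [psiW]
  | cons a u ih => simp [psiW_cons, ih, psiL_append]

lemma psiW_ne_nil (u : List A) {x : List A} (hx : x ≠ []) : psiW u x ≠ [] := by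
  induction u with
  | nil => simpa [psiW]
  | cons a u ih => exact psiL_ne_nil a ih

lemma psiW_concat (u : List A) (c : A) (x : List A) :
    psiW (u ++ [c]) x = psiW u (psiL c x) := by
  induction u with
  | nil => simp [psiW]
  | cons a u ih =>
    show psiW (a :: (u ++ [c])) x = psiL a (psiW u (psiL c x))
    rw [psiW_cons, ih]

lemma psiL_single_self (a : A) : psiL a [a] = [a] := by simp [psiL]

lemma psiL_single_ne (a b : A) (h : b ≠ a) : psiL a [b] = [a, b] := by
  simp [psiL, h]

lemma psibarL_single_ne (a b : A) (h : b ≠ a) : psibarL a [b] = [b, a] := by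
  simp [psibarL, h]

/-- Key structural lemma: the image of some letter is a proper prefix or proper
suffix of the images of all other letters. -/
lemma key_lemma (l : List (List A → List A)) (hl : l ≠ [])
    (hmem : ∀ f ∈ l, ∃ a : A, f = psiL a ∨ f = psibarL a) (π : Equiv.Perm A) :
    ∃ amin : A, ∀ b : A, b ≠ amin →
      ∃ s : List A, s ≠ [] ∧
        (l.foldr (· ∘ ·) (fun x => x.map π) [b]
            = l.foldr (· ∘ ·) (fun x => x.map π) [amin] ++ s ∨
         l.foldr (· ∘ ·) (fun x => x.map π) [b]
            = s ++ l.foldr (· ∘ ·) (fun x => x.map π) [amin]) := by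
  induction l with
  | nil => exact absurd rfl hl
  | cons f l ih =>
    obtain ⟨a, hf⟩ := hmem f List.mem_cons_self
    cases l with
    | nil =>
      refine ⟨π.symm a, fun b hb => ?_⟩
      have hπ : π b ≠ a := by
        intro h; exact hb (by simpa using congrArg π.symm h)
      have hπa : π (π.symm a) = a := π.apply_symm_apply a
      simp only [List.foldr_cons, List.foldr_nil, Function.comp_apply,
        List.map_cons, List.map_nil, hπa]
      rcases hf with hf | hf <;> subst hf
      · exact ⟨[π b], by simp, Or.inl (by
          rw [psiL_single_self, psiL_single_ne a (π b) hπ]; rfl)⟩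
      · refine ⟨[π b], by simp, Or.inr ?_⟩
        have : psibarL a [a] = [a] := by simp [psibarL]
        rw [this, psibarL_single_ne a (π b) hπ]; rfl
    | cons g l' =>
      obtain ⟨amin, ham⟩ := ih (by simp)
        (fun f hf => hmem f (List.mem_cons_of_mem _ hf))
      refine ⟨amin, fun b hb => ?_⟩
      obtain ⟨s, hs, hcase⟩ := ham b hb
      simp only [List.foldr_cons, Function.comp_apply] at hcase ⊢
      rcases hf with hf | hf <;> subst hf
      · refine ⟨psiL a s, psiL_ne_nil a hs, ?_⟩
        rcases hcase with h | h <;> rw [h, psiL_append]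
        · exact Or.inl rfl
        · exact Or.inr rfl
      · refine ⟨psibarL a s, psibarL_ne_nil a hs, ?_⟩
        rcases hcase with h | h <;> rw [h, psibarL_append]
        · exact Or.inl rfl
        · exact Or.inr rfl

end Aux

/-- every episturmian morphism which is not a permutation has a unique
minimal letter; if σ = ψ_u with u nonempty, it is the last letter of u. -/
theorem exists_unique_minimal_letter {A : Type*} [Fintype A] [DecidableEq A]
    (hA : 1 < Fintype.card A) (k : ℕ) (hk : 1 ≤ k)
    (φ : Fin k → (List A → List A))
    (hφ : ∀ i : Fin k, ∃ a : A, φ i = psiL a ∨ φ i = psibarL a)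
    (π : Equiv.Perm A) (σ : List A → List A)
    (hσ : σ = (List.ofFn φ).foldr (· ∘ ·) (fun x => x.map π)) :
    ∃ amin : A,
      (∀ a : A, a ≠ amin → (σ [amin]).length < (σ [a]).length) ∧
      (∀ b : A, (∀ a : A, a ≠ b → (σ [b]).length < (σ [a]).length) → b = amin) ∧
      (∀ (v : List A) (hv : v ≠ []), (∀ x : List A, σ x = psiW v x) →
        amin = v.getLast hv) := by
  have hl : List.ofFn φ ≠ [] := by
    simp [List.ofFn_eq_nil_iff]
    omega
  have hmem : ∀ f ∈ List.ofFn φ, ∃ a : A, f = psiL a ∨ f = psibarL a := by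
    intro f hf
    obtain ⟨i, hi⟩ := (List.mem_ofFn).mp hf
    exact hi ▸ hφ i
  obtain ⟨amin, ham⟩ := key_lemma (List.ofFn φ) hl hmem π
  have hlen : ∀ a : A, a ≠ amin → (σ [amin]).length < (σ [a]).length := by
    intro a ha
    obtain ⟨s, hs, hcase⟩ := ham a ha
    have hsl : 0 < s.length := List.length_pos_iff.mpr hs
    rcases hcase with h | h <;> rw [hσ, h] <;> simp <;> omega
  refine ⟨amin, hlen, ?_, ?_⟩
  · intro b hb
    by_contra hne
    exact absurd (hlen b hne) (by have := hb amin (Ne.symm hne); omega)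
  · intro v hv hpsi
    set c := v.getLast hv with hc
    have hvd : v.dropLast ++ [c] = v := List.dropLast_append_getLast hv
    by_contra hne
    have h1 : σ [c] = psiW v.dropLast [c] := by
      have h := psiW_concat v.dropLast c [c]
      rw [hvd, psiL_single_self] at h
      rw [hpsi, h]
    have h2 : σ [amin] = psiW v.dropLast [c] ++ psiW v.dropLast [amin] := by
      have h := psiW_concat v.dropLast c [amin]
      rw [hvd, psiL_single_ne c amin hne,
        show ([c, amin] : List A) = [c] ++ [amin] from rfl, psiW_append_word] at h
      rw [hpsi, h]
    have hlt := hlen c (fun h => hne h.symm)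
    rw [h1, h2] at hlt
    have hpos : 0 < (psiW v.dropLast [amin]).length :=
      List.length_pos_iff.mpr (psiW_ne_nil _ (by simp))
    simp at hlt
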